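/- Fix an integer m ≥ 1, ρ ∈ ℝ, and α ∈ (0, e^{−ρ}·(mπ)^{−1/2}), and set R* = √m·α/2. For each n ≥ 1, let K_n be the Laguerre-Gaussian kernel on ℝⁿ with parameters m, α, ρ. Then lim_{n→∞} −(1/n)·log( e^{−nρ}·∫_{B_n(√n·R)} K_n(x)² dx ) = −ρ − (1/2)·log(2πe) + 2R²/(α²m) − log R for every 0 < R < R*, and = −ρ − log α − (1/2)·log(mπ/2) for every R > R*. -/

import Mathlib

open MeasureTheory Filter Real
open scoped ENNReal Topology

/-- The generalized Laguerre polynomial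
`L_m^β(r) = Σ_{k=0}^m [Γ(m+β+1)/(Γ(β+k+1)·(m−k)!)]·(−r)^k/k!`. -/
noncomputable def laguerreL (m : ℕ) (β : ℝ) (r : ℝ) : ℝ :=
  ∑ k ∈ Finset.range (m + 1),
    (Real.Gamma ((m : ℝ) + β + 1) / (Real.Gamma (β + (k : ℝ) + 1) * (Nat.factorial (m - k)))) *
      ((-r) ^ k / (Nat.factorial k))

/-- The Laguerre-Gaussian kernel on `ℝⁿ` with parameters `m ≥ 1`, `α > 0`, `ρ ∈ ℝ`. -/
noncomputable def lagGaussKernel (m : ℕ) (α ρ : ℝ) (n : ℕ)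
    (x : EuclideanSpace ℝ (Fin n)) : ℝ :=
  (Real.exp (n * ρ) /
      (Real.Gamma ((m : ℝ) + (n : ℝ) / 2) /
        (Real.Gamma ((n : ℝ) / 2 + 1) * (Nat.factorial (m - 1))))) *
    laguerreL (m - 1) ((n : ℝ) / 2) (‖x‖ ^ 2 / (α ^ 2 * m)) *
    Real.exp (-(‖x‖ ^ 2 / (α ^ 2 * m)))

/-!
With `c = α² m` and `F_n = ₁F₁(1 - m; n/2 + 1; ·)`, the kernel is `e^{nρ} F_n(|x|²/c) e^{-|x|²/c}`,
and polar coordinates turn `e^{-nρ} ∫_{B(√n R)} K_n²` into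
`e^{nρ} · n |B₁| · ∫_0^{√n R} y^{n-1} F_n(y²/c)² e^{-2y²/c} dy`.
On the scale `y = √n σ` the factor `F_n(nσ²/c)` is close to `(1 - 2σ²/c)^{m-1}`, hence bounded below
where `2σ² < c`, and it grows at most polynomially in `n`; so the radial integral behaves like
`(√n · max_{σ ≤ R} σ e^{-2σ²/c})^n`. The maximum is attained at `min R (√c / 2)`, which is the phase
transition at `R* = √c / 2`. Finally `|B₁| = π^{n/2} / Γ(n/2 + 1)`, and Legendre's duplication
formula with Stirling's bounds on `n!` gives `log Γ(n/2 + 1) = (n/2) log (n / 2e) + O(log n)`.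
-/

open Finset

lemma pow_le_ascPochhammer_eval {x : ℝ} (hx : 0 ≤ x) (k : ℕ) :
    x ^ k ≤ (ascPochhammer ℝ k).eval x := by
  induction k with
  | zero => simp
  | succ k ih =>
    rw [pow_succ, ascPochhammer_succ_eval]
    exact mul_le_mul ih (by linarith [k.cast_nonneg (α := ℝ)]) hx (ih.trans' (by positivity))

lemma ascPochhammer_eval_le_pow {x : ℝ} (hx : 0 ≤ x) {k M : ℕ} (hk : k ≤ M) :
    (ascPochhammer ℝ k).eval x ≤ (x + M) ^ k := by
  induction k with
  | zero => simp
  | succ k ih =>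
    rw [pow_succ, ascPochhammer_succ_eval]
    have hkM : (k : ℝ) ≤ M := by exact_mod_cast (Nat.le_succ k).trans hk
    exact mul_le_mul (ih (Nat.le_of_succ_le hk)) (by linarith)
      (by positivity) (by positivity)

lemma one_le_ascPochhammer_eval {β : ℝ} (hβ : 0 ≤ β) (k : ℕ) :
    1 ≤ (ascPochhammer ℝ k).eval (β + 1) :=
  (one_le_pow₀ (by linarith)).trans (pow_le_ascPochhammer_eval (by linarith) k)

lemma Real.Gamma_add_nat_eq_mul_ascPochhammer {x : ℝ} (hx : 0 < x) (k : ℕ) :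
    Gamma (x + k) = Gamma x * (ascPochhammer ℝ k).eval x := by
  induction k with
  | zero => simp
  | succ k ih =>
    rw [ascPochhammer_succ_eval, Nat.cast_succ, ← add_assoc,
      Gamma_add_one (by positivity), ih]
    ring

/-- `₁F₁(-M; β + 1; t)`, the Laguerre polynomial `L_M^β` normalized to take the value `1` at `0`. -/
noncomputable def normalizedLaguerre (M : ℕ) (β t : ℝ) : ℝ :=
  ∑ k ∈ range (M + 1), (-1) ^ k * (M.choose k : ℝ) * (t ^ k / (ascPochhammer ℝ k).eval (β + 1))

lemma laguerreL_eq_mul_normalizedLaguerre (M : ℕ) {β : ℝ} (hβ : -1 < β) (t : ℝ) :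
    laguerreL M β t =
      Gamma (M + β + 1) / (Gamma (β + 1) * M.factorial) * normalizedLaguerre M β t := by
  rw [laguerreL, normalizedLaguerre, mul_sum]
  refine sum_congr rfl fun k hk => ?_
  have hkM : k ≤ M := Nat.lt_succ_iff.mp (mem_range.mp hk)
  have hGamma : Gamma (β + k + 1) = Gamma (β + 1) * (ascPochhammer ℝ k).eval (β + 1) := by
    rw [add_right_comm, Gamma_add_nat_eq_mul_ascPochhammer (by linarith)]
  have hchoose : (M.choose k : ℝ) * k.factorial * (M - k).factorial = M.factorial := by
    exact_mod_cast Nat.choose_mul_factorial_mul_factorial hkM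
  have := (Gamma_pos_of_pos (by linarith : 0 < β + 1)).ne'
  have := (ascPochhammer_pos k (β + 1) (by linarith)).ne'
  rw [hGamma, neg_pow]
  field_simp
  linear_combination -(Gamma (M + β + 1) * t ^ k) * hchoose

section NormalizedLaguerre

variable (M : ℕ)

lemma continuous_normalizedLaguerre (β : ℝ) : Continuous (normalizedLaguerre M β) := by
  unfold normalizedLaguerre
  fun_prop

lemma abs_normalizedLaguerre_le {β t : ℝ} (hβ : 0 ≤ β) (ht : 0 ≤ t) :
    |normalizedLaguerre M β t| ≤ (1 + t) ^ M := by
  rw [normalizedLaguerre, add_comm 1 t, add_pow]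
  refine (abs_sum_le_sum_abs _ _).trans (sum_le_sum fun k _ => ?_)
  have hpoch := one_le_ascPochhammer_eval hβ k
  rw [abs_mul, abs_mul, abs_pow, abs_neg, abs_one, one_pow, one_mul, Nat.abs_cast,
    abs_of_nonneg (by positivity), one_pow, mul_one, mul_comm]
  gcongr
  exact div_le_self (by positivity) hpoch

lemma pow_div_ascPochhammer_mem_Icc {β : ℝ} (hβ : 0 < β) {k : ℕ} (hk : k ≤ M) :
    β ^ k / (ascPochhammer ℝ k).eval (β + 1) ∈ Set.Icc ((β / (β + 1 + M)) ^ M) 1 := by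
  have hpoch := ascPochhammer_pos k (β + 1) (by linarith)
  constructor
  · calc (β / (β + 1 + M)) ^ M ≤ (β / (β + 1 + M)) ^ k :=
          pow_le_pow_of_le_one (by positivity) (div_le_one_of_le₀ (by linarith) (by positivity)) hk
      _ = β ^ k / (β + 1 + M) ^ k := div_pow _ _ _
      _ ≤ β ^ k / (ascPochhammer ℝ k).eval (β + 1) := by
          gcongr
          exact ascPochhammer_eval_le_pow (by linarith) hk
  · rw [div_le_one hpoch]
    exact (pow_le_pow_left₀ hβ.le (by linarith) k).trans (pow_le_ascPochhammer_eval (by linarith) k)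

lemma abs_normalizedLaguerre_sub_le {β s : ℝ} (hβ : 0 < β) (hs0 : 0 ≤ s) (hs1 : s ≤ 1) :
    |normalizedLaguerre M β (β * s) - (1 - s) ^ M| ≤ 2 ^ M * (1 - (β / (β + 1 + M)) ^ M) := by
  have hbinom : (1 - s) ^ M = ∑ k ∈ range (M + 1), (-1) ^ k * (M.choose k : ℝ) * s ^ k := by
    rw [sub_eq_neg_add, add_pow]
    exact sum_congr rfl fun k _ => by rw [neg_pow, one_pow]; ring
  have hchoose : (2 : ℝ) ^ M = ∑ k ∈ range (M + 1), (M.choose k : ℝ) := by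
    exact_mod_cast (Nat.sum_range_choose M).symm
  rw [normalizedLaguerre, hbinom, ← sum_sub_distrib, hchoose, sum_mul]
  refine (abs_sum_le_sum_abs _ _).trans (sum_le_sum fun k hk => ?_)
  obtain ⟨hw_ge, hw_le⟩ :=
    pow_div_ascPochhammer_mem_Icc M hβ (Nat.lt_succ_iff.mp (mem_range.mp hk))
  have hterm : (-1) ^ k * (M.choose k : ℝ) * ((β * s) ^ k / (ascPochhammer ℝ k).eval (β + 1)) -
      (-1) ^ k * M.choose k * s ^ k =
      -((-1) ^ k * M.choose k * s ^ k * (1 - β ^ k / (ascPochhammer ℝ k).eval (β + 1))) := by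
    rw [mul_pow]; ring
  rw [hterm, abs_neg, abs_mul, abs_mul, abs_mul, abs_pow, abs_neg, abs_one, one_pow, one_mul,
    Nat.abs_cast, abs_pow, abs_of_nonneg hs0, abs_of_nonneg (by linarith)]
  calc (M.choose k : ℝ) * s ^ k * (1 - β ^ k / (ascPochhammer ℝ k).eval (β + 1))
      ≤ M.choose k * 1 * (1 - (β / (β + 1 + M)) ^ M) := by
        gcongr
        exact pow_le_one₀ hs0 hs1
    _ = _ := by rw [mul_one]

lemma exists_forall_le_normalizedLaguerre {v : ℝ} (hv : v < 1) :
    ∃ δ > 0, ∀ᶠ β in atTop, ∀ t, 0 ≤ t → t ≤ v * β → δ ≤ normalizedLaguerre M β t := by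
  have hδ : 0 < (1 - v) ^ M / 2 := by have := pow_pos (sub_pos.mpr hv) M; positivity
  refine ⟨(1 - v) ^ M / 2, hδ, ?_⟩
  have hratio : Tendsto (fun β : ℝ => β / (β + 1 + M)) atTop (𝓝 1) := by
    have hden : Tendsto (fun β : ℝ => β + 1 + M) atTop atTop :=
      tendsto_atTop_add_const_right _ _ (tendsto_atTop_add_const_right _ _ tendsto_id)
    have hsmall := (tendsto_const_nhds (x := (1 + M : ℝ))).div_atTop hden
    refine ((tendsto_const_nhds (x := (1 : ℝ))).sub hsmall).congr' ?_ |>.trans (by simp)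
    filter_upwards [eventually_gt_atTop 0] with β hβ
    field_simp
    ring
  have herr : Tendsto (fun β : ℝ => 2 ^ M * (1 - (β / (β + 1 + M)) ^ M)) atTop (𝓝 0) := by
    simpa using ((hratio.pow M).const_sub 1).const_mul ((2 : ℝ) ^ M)
  filter_upwards [herr.eventually (eventually_le_nhds hδ), eventually_gt_atTop 0]
    with β hβerr hβ t ht htv
  have hs0 : 0 ≤ t / β := div_nonneg ht hβ.le
  have hsv : t / β ≤ v := (div_le_iff₀ hβ).mpr (by linarith)
  have happrox := abs_normalizedLaguerre_sub_le M hβ hs0 (by linarith)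
  rw [mul_div_cancel₀ t hβ.ne'] at happrox
  have hpow : (1 - v) ^ M ≤ (1 - t / β) ^ M := pow_le_pow_left₀ (by linarith) (by linarith) M
  linarith [(abs_le.mp happrox).1]

end NormalizedLaguerre

section RadialProfile

/-- On the sphere of radius `√n σ`, the Gaussian factor of the squared kernel times the polar
Jacobian is `(√n · radialProfile c σ) ^ n` up to a factor subexponential in `n`. -/
noncomputable def radialProfile (c σ : ℝ) : ℝ := σ * exp (-(2 * σ ^ 2 / c))

variable {c : ℝ}

lemma hasDerivAt_radialProfile (c σ : ℝ) :
    HasDerivAt (radialProfile c) (exp (-(2 * σ ^ 2 / c)) * (1 - 4 * σ ^ 2 / c)) σ := by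
  have hexp : HasDerivAt (fun σ : ℝ => -(2 * σ ^ 2 / c)) (-(2 * (2 * σ) / c)) σ := by
    simpa using (((hasDerivAt_pow 2 σ).const_mul 2).div_const c).fun_neg
  exact ((hasDerivAt_id' σ).fun_mul hexp.exp).congr_deriv (by ring)

lemma log_radialProfile {σ : ℝ} (hσ : 0 < σ) :
    log (radialProfile c σ) = log σ - 2 * σ ^ 2 / c := by
  rw [radialProfile, log_mul hσ.ne' (exp_pos _).ne', log_exp, sub_eq_add_neg]

lemma radialProfile_pos {σ : ℝ} (hσ : 0 < σ) : 0 < radialProfile c σ := by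
  unfold radialProfile; positivity

lemma monotoneOn_radialProfile (hc : 0 < c) :
    MonotoneOn (radialProfile c) (Set.Icc 0 (√c / 2)) := by
  refine monotoneOn_of_deriv_nonneg (convex_Icc _ _)
    (fun σ _ => (hasDerivAt_radialProfile c σ).continuousAt.continuousWithinAt)
    (fun σ _ => (hasDerivAt_radialProfile c σ).differentiableAt.differentiableWithinAt)
    fun σ hσ => ?_
  rw [interior_Icc] at hσ
  rw [(hasDerivAt_radialProfile c σ).deriv]
  have : σ ^ 2 ≤ c / 4 := by
    nlinarith [sq_sqrt hc.le, hσ.1, hσ.2]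
  have : 4 * σ ^ 2 / c ≤ 1 := by rw [div_le_one hc]; linarith
  exact mul_nonneg (exp_pos _).le (by linarith)

lemma antitoneOn_radialProfile (hc : 0 < c) :
    AntitoneOn (radialProfile c) (Set.Ici (√c / 2)) := by
  refine antitoneOn_of_deriv_nonpos (convex_Ici _)
    (fun σ _ => (hasDerivAt_radialProfile c σ).continuousAt.continuousWithinAt)
    (fun σ _ => (hasDerivAt_radialProfile c σ).differentiableAt.differentiableWithinAt)
    fun σ hσ => ?_
  rw [interior_Ici] at hσ
  rw [(hasDerivAt_radialProfile c σ).deriv]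
  have hs := sqrt_nonneg c
  have : c / 4 ≤ σ ^ 2 := by
    nlinarith [sq_sqrt hc.le, Set.mem_Ioi.mp hσ]
  have : 1 ≤ 4 * σ ^ 2 / c := by rw [le_div_iff₀ hc]; linarith
  exact mul_nonpos_of_nonneg_of_nonpos (exp_pos _).le (by linarith)

lemma radialProfile_le_min (hc : 0 < c) {σ R : ℝ} (hσ : 0 ≤ σ) (hσR : σ ≤ R) :
    radialProfile c σ ≤ radialProfile c (min R (√c / 2)) := by
  have hs := sqrt_nonneg c
  rcases le_total σ (√c / 2) with hσc | hσc
  · exact monotoneOn_radialProfile hc ⟨hσ, hσc⟩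
      ⟨le_min (hσ.trans hσR) (by linarith), min_le_right _ _⟩ (le_min hσR hσc)
  · rw [min_eq_right (hσc.trans hσR)]
    exact antitoneOn_radialProfile hc Set.self_mem_Ici hσc hσc

lemma two_mul_sq_min_lt {R : ℝ} (hc : 0 < c) (hR : 0 < R) : 2 * min R (√c / 2) ^ 2 < c := by
  have : min R (√c / 2) ^ 2 ≤ (√c / 2) ^ 2 := by
    have : 0 < min R (√c / 2) := lt_min hR (by positivity)
    gcongr
    exact min_le_right _ _
  rw [div_pow, sq_sqrt hc.le] at this
  linarith

lemma pow_mul_exp_le_radialProfile (hc : 0 < c) {n : ℕ} (hn : n ≠ 0) {y : ℝ} (hy : 0 ≤ y) :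
    y ^ (n - 1) * exp (-(2 * y ^ 2 / c)) ≤ (√n * radialProfile c (y / √n)) ^ (n - 1) := by
  have hsqrt : 0 < √(n : ℝ) := sqrt_pos.mpr (by positivity)
  have hy_sq : (y / √n) ^ 2 * n = y ^ 2 := by
    rw [div_pow, sq_sqrt n.cast_nonneg, div_mul_cancel₀ _ (by positivity)]
  have hexp : exp (-(2 * y ^ 2 / c)) ≤ exp (-(2 * (y / √n) ^ 2 / c)) ^ (n - 1) := by
    rw [← exp_nat_mul, exp_le_exp, Nat.cast_sub (Nat.one_le_iff_ne_zero.mpr hn), ← hy_sq]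
    rw [show 2 * ((y / √n) ^ 2 * n) / c = n * (2 * (y / √n) ^ 2 / c) by ring]
    have : 0 ≤ 2 * (y / √n) ^ 2 / c := by positivity
    linarith
  calc y ^ (n - 1) * exp (-(2 * y ^ 2 / c))
      ≤ y ^ (n - 1) * exp (-(2 * (y / √n) ^ 2 / c)) ^ (n - 1) := by gcongr
    _ = (√n * radialProfile c (y / √n)) ^ (n - 1) := by
      rw [radialProfile, ← mul_pow, ← mul_assoc, mul_div_cancel₀ _ hsqrt.ne']

end RadialProfile

lemma tendsto_add_mul_log_div (a b : ℝ) :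
    Tendsto (fun n : ℕ => (a + b * log n) / n) atTop (𝓝 0) := by
  have hlog : Tendsto (fun n : ℕ => log n / n) atTop (𝓝 0) := by
    simpa [Function.comp_def] using (tendsto_pow_log_div_mul_add_atTop 1 0 1 one_ne_zero).comp
      tendsto_natCast_atTop_atTop
  simpa [add_div, mul_div_assoc] using
    (tendsto_const_div_atTop_nhds_zero_nat a).add (hlog.const_mul b)

lemma tendsto_log_mul_pow_mul_pow_div {C B : ℝ} (hC : 0 < C) (hB : 0 < B) (p : ℕ) :
    Tendsto (fun n : ℕ => log (C * n ^ p * B ^ n) / n) atTop (𝓝 (log B)) := by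
  have h := (tendsto_add_mul_log_div (log C) p).add_const (log B)
  rw [zero_add] at h
  refine h.congr' ?_
  filter_upwards [eventually_ne_atTop 0] with n hn
  have hn' : (n : ℝ) ≠ 0 := Nat.cast_ne_zero.mpr hn
  rw [log_mul (by positivity) (by positivity), log_mul hC.ne' (by positivity), log_pow, log_pow]
  field_simp

theorem tendsto_log_div_of_bounds {u : ℕ → ℝ} {A K : ℝ} {p : ℕ} (hA : 0 < A)
    (h_le : ∀ᶠ n in atTop, u n ≤ K * n ^ p * A ^ n)
    (h_ge : ∀ B, 0 < B → B < A → ∃ C > 0, ∀ᶠ n in atTop, C * B ^ n ≤ u n) :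
    Tendsto (fun n => log (u n) / n) atTop (𝓝 (log A)) := by
  have hpos : ∀ᶠ n in atTop, 0 < u n := by
    obtain ⟨C, hC, hCu⟩ := h_ge (A / 2) (by positivity) (by linarith)
    exact hCu.mono fun n h => lt_of_lt_of_le (by positivity) h
  have hK : 0 < K := by
    obtain ⟨n, hun, hle⟩ := (hpos.and h_le).exists
    by_contra! hK
    have : K * n ^ p * A ^ n ≤ 0 :=
      mul_nonpos_of_nonpos_of_nonneg (mul_nonpos_of_nonpos_of_nonneg hK (by positivity))
        (by positivity)
    linarith
  refine tendsto_order.2 ⟨fun a ha => ?_, fun b hb => ?_⟩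
  · set B := exp ((a + log A) / 2)
    have haB : a < log B := by rw [log_exp]; linarith
    obtain ⟨C, hC, hCu⟩ := h_ge B (exp_pos _) ((lt_log_iff_exp_lt hA).mp (by linarith))
    filter_upwards [(tendsto_log_mul_pow_mul_pow_div hC (exp_pos _) 0).eventually
      (lt_mem_nhds haB), hCu] with n hlt hle
    rw [pow_zero, mul_one] at hlt
    exact hlt.trans_le (div_le_div_of_nonneg_right (log_le_log (by positivity) hle) n.cast_nonneg)
  · filter_upwards [(tendsto_log_mul_pow_mul_pow_div hK hA p).eventually (gt_mem_nhds hb), h_le,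
      hpos] with n hlt hle hun
    exact lt_of_le_of_lt (div_le_div_of_nonneg_right (log_le_log hun hle) n.cast_nonneg) hlt

lemma log_factorial_le {n : ℕ} (hn : n ≠ 0) :
    log n.factorial ≤ n * log n - n + log n / 2 + 1 := by
  obtain ⟨k, rfl⟩ := Nat.exists_eq_succ_of_ne_zero hn
  have hanti : Stirling.stirlingSeq (k + 1) ≤ Stirling.stirlingSeq 1 :=
    Stirling.stirlingSeq'_antitone (Nat.zero_le k)
  have hlog := log_le_log (Stirling.stirlingSeq'_pos k) hanti
  rw [Stirling.log_stirlingSeq_formula, Stirling.stirlingSeq_one, log_div (exp_pos 1).ne'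
    (by positivity), log_exp, log_sqrt zero_le_two, log_div (by positivity) (exp_pos 1).ne',
    log_exp, log_mul two_ne_zero (by positivity)] at hlog
  linarith

/-- Legendre's duplication formula `Γ(n/2 + 1/2) Γ(n/2 + 1) = n! 2⁻ⁿ √π`, together with
`Γ(n/2 + 1/2) ≤ Γ(n/2 + 1) ≤ (n + 1)/2 · Γ(n/2 + 1/2)`. -/
lemma Gamma_half_add_one_sq_mem_Icc {n : ℕ} (hn : 3 ≤ n) :
    Gamma (n / 2 + 1) ^ 2 ∈
      Set.Icc (n.factorial * √π / 2 ^ n) ((n + 1) / 2 * (n.factorial * √π / 2 ^ n)) := by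
  have hn' : (3 : ℝ) ≤ n := by exact_mod_cast hn
  have hdup := Gamma_mul_Gamma_add_half_of_pos (s := n / 2 + 1 / 2) (by positivity)
  rw [show 2 * ((n : ℝ) / 2 + 1 / 2) = n + 1 by ring, show (1 : ℝ) - (n + 1) = -n by ring,
    show (n : ℝ) / 2 + 1 / 2 + 1 / 2 = n / 2 + 1 by ring, Gamma_nat_eq_factorial,
    rpow_neg zero_le_two, rpow_natCast] at hdup
  have hmono := Gamma_strictMonoOn_Ici.monotoneOn (a := (n : ℝ) / 2 + 1 / 2) (b := n / 2 + 1)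
    (by simp only [Set.mem_Ici]; linarith) (by simp only [Set.mem_Ici]; linarith) (by linarith)
  have hstep : Gamma (n / 2 + 1) ≤ Gamma (n / 2 + 1 / 2 + 1) :=
    Gamma_strictMonoOn_Ici.monotoneOn (by simp only [Set.mem_Ici]; linarith)
      (by simp only [Set.mem_Ici]; linarith) (by linarith)
  rw [Gamma_add_one (s := n / 2 + 1 / 2) (by positivity)] at hstep
  have hpos := Gamma_pos_of_pos (by positivity : (0 : ℝ) < n / 2 + 1)
  rw [show (n.factorial : ℝ) * √π / 2 ^ n = Gamma (n / 2 + 1 / 2) * Gamma (n / 2 + 1) by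
    rw [hdup]; ring]
  constructor <;> nlinarith

lemma log_Gamma_half_add_one_sub_mem_Icc {n : ℕ} (hn : 3 ≤ n) :
    log (Gamma (n / 2 + 1)) - n * (log n - 1 - log 2) / 2 ∈ Set.Icc 0 (2 + log n) := by
  have hn' : (3 : ℝ) ≤ n := by exact_mod_cast hn
  have hn0 : n ≠ 0 := by omega
  obtain ⟨hlo, hhi⟩ := Gamma_half_add_one_sq_mem_Icc hn
  have hpos := Gamma_pos_of_pos (by positivity : (0 : ℝ) < n / 2 + 1)
  have hX : (0 : ℝ) < n.factorial * √π / 2 ^ n := by positivity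
  have hlogX : log (n.factorial * √π / 2 ^ n) = log n.factorial + log π / 2 - n * log 2 := by
    rw [log_div (by positivity) (by positivity), log_mul (by positivity) (by positivity),
      log_sqrt pi_pos.le, log_pow]
  have hlo' := log_le_log hX hlo
  have hhi' := log_le_log (by positivity) hhi
  rw [log_pow, hlogX] at hlo'
  rw [log_pow, log_mul (by positivity) hX.ne', hlogX] at hhi'
  have hstirling := Stirling.le_log_factorial_stirling hn0
  have hfact := log_factorial_le hn0
  have hlog_n : 0 ≤ log n := log_nonneg (by linarith)
  have hlog_2pi : 0 ≤ log (2 * π) := log_nonneg (by nlinarith [pi_gt_three])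
  have hlog_pi : 0 ≤ log π := log_nonneg (by linarith [pi_gt_three])
  have hlog_pi' : log π ≤ 3 := by linarith [log_le_sub_one_of_pos pi_pos, pi_lt_d2]
  have hlog_half : log ((n + 1) / 2) ≤ log n := log_le_log (by positivity) (by linarith)
  constructor <;> push_cast at * <;> linarith

theorem tendsto_log_Gamma_half_add_one_div :
    Tendsto (fun n : ℕ => log (Gamma (n / 2 + 1)) / n - log n / 2) atTop
      (𝓝 (-(1 + log 2) / 2)) := by
  have hsqueeze : Tendsto
      (fun n : ℕ => (log (Gamma (n / 2 + 1)) - n * (log n - 1 - log 2) / 2) / n) atTop (𝓝 0) := by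
    refine tendsto_of_tendsto_of_tendsto_of_le_of_le' tendsto_const_nhds
      (by simpa using tendsto_add_mul_log_div 2 1) ?_ ?_ <;>
    filter_upwards [eventually_ge_atTop 3] with n hn
    · exact div_nonneg (log_Gamma_half_add_one_sub_mem_Icc hn).1 n.cast_nonneg
    · exact div_le_div_of_nonneg_right (log_Gamma_half_add_one_sub_mem_Icc hn).2 n.cast_nonneg
  refine (hsqueeze.sub_const ((1 + log 2) / 2)).congr' ?_ |>.trans (by rw [zero_sub, neg_div])
  filter_upwards [eventually_ne_atTop 0] with n hn
  have hn' : (n : ℝ) ≠ 0 := Nat.cast_ne_zero.mpr hn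
  field_simp
  ring

lemma integral_closedBall_fun_norm {E : Type*} [NormedAddCommGroup E] [NormedSpace ℝ E]
    [MeasurableSpace E] [BorelSpace E] [FiniteDimensional ℝ E] [Nontrivial E]
    (μ : Measure E) [μ.IsAddHaarMeasure] (f : ℝ → ℝ) (r : ℝ) :
    ∫ x in Metric.closedBall (0 : E) r, f ‖x‖ ∂μ =
      Module.finrank ℝ E * μ.real (Metric.ball 0 1) *
        ∫ y in Set.Ioc 0 r, y ^ (Module.finrank ℝ E - 1) * f y := by
  have hball : ∫ x in Metric.closedBall (0 : E) r, f ‖x‖ ∂μ =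
      ∫ x, (Set.Iic r).indicator f ‖x‖ ∂μ := by
    rw [← integral_indicator measurableSet_closedBall]
    congr 1 with x
    by_cases h : ‖x‖ ≤ r
    · rw [Set.indicator_of_mem (by simpa using h), Set.indicator_of_mem (Set.mem_Iic.mpr h)]
    · rw [Set.indicator_of_notMem (by simpa using h), Set.indicator_of_notMem (by simpa using h)]
  have hradial : ∫ y in Set.Ioi 0, y ^ (Module.finrank ℝ E - 1) • (Set.Iic r).indicator f y =
      ∫ y in Set.Ioc 0 r, y ^ (Module.finrank ℝ E - 1) * f y := by
    simp_rw [smul_eq_mul, ← Set.indicator_mul_right _ (fun y => y ^ (Module.finrank ℝ E - 1))]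
    rw [setIntegral_indicator measurableSet_Iic, Set.Ioi_inter_Iic]
  rw [hball, integral_fun_norm_addHaar, hradial, nsmul_eq_mul, smul_eq_mul, mul_assoc]

lemma sq_le_mul_sq_of_le_sqrt_mul {x y σ : ℝ} (hx : 0 ≤ x) (hy : 0 ≤ y) (h : y ≤ √x * σ) :
    y ^ 2 ≤ x * σ ^ 2 :=
  calc y ^ 2 ≤ (√x * σ) ^ 2 := by gcongr
    _ = x * σ ^ 2 := by rw [mul_pow, sq_sqrt hx]

section RadialIntegral

variable (M : ℕ) {c R : ℝ}

noncomputable def radialIntegrand (c : ℝ) (n : ℕ) (y : ℝ) : ℝ :=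
  y ^ (n - 1) * (normalizedLaguerre M (n / 2) (y ^ 2 / c) * exp (-(y ^ 2 / c))) ^ 2

noncomputable def radialIntegral (c R : ℝ) (n : ℕ) : ℝ :=
  ∫ y in Set.Ioc 0 (√n * R), radialIntegrand M c n y

lemma radialIntegrand_eq (n : ℕ) (y : ℝ) :
    radialIntegrand M c n y =
      normalizedLaguerre M (n / 2) (y ^ 2 / c) ^ 2 * (y ^ (n - 1) * exp (-(2 * y ^ 2 / c))) := by
  rw [radialIntegrand, mul_pow, ← exp_nat_mul]
  push_cast
  ring_nf

lemma integrableOn_radialIntegrand (n : ℕ) (a b : ℝ) :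
    IntegrableOn (radialIntegrand M c n) (Set.Ioc a b) := by
  have := continuous_normalizedLaguerre M (n / 2)
  exact Continuous.integrableOn_Ioc (by unfold radialIntegrand; fun_prop)

lemma radialIntegral_le (hc : 0 < c) (hR : 0 < R) {n : ℕ} (hn : n ≠ 0) :
    radialIntegral M c R n ≤ √n * R * ((1 + n * R ^ 2 / c) ^ (2 * M) *
      (√n * radialProfile c (min R (√c / 2))) ^ (n - 1)) := by
  have hsqrt : 0 < √(n : ℝ) := sqrt_pos.mpr (by positivity)
  have hbound : ∀ y ∈ Set.Ioc 0 (√n * R),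
      radialIntegrand M c n y ≤
        (1 + n * R ^ 2 / c) ^ (2 * M) * (√n * radialProfile c (min R (√c / 2))) ^ (n - 1) := by
    rintro y ⟨hy0, hyR⟩
    have hσR : y / √n ≤ R := (div_le_iff₀' hsqrt).mpr hyR
    have ht : y ^ 2 / c ≤ n * R ^ 2 / c := by
      gcongr
      exact sq_le_mul_sq_of_le_sqrt_mul n.cast_nonneg hy0.le hyR
    have hF : normalizedLaguerre M (n / 2) (y ^ 2 / c) ^ 2 ≤ (1 + n * R ^ 2 / c) ^ (2 * M) := by
      rw [pow_mul', ← sq_abs]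
      have := abs_normalizedLaguerre_le M (β := n / 2) (by positivity)
        (by positivity : 0 ≤ y ^ 2 / c)
      gcongr
      exact this.trans (by gcongr)
    rw [radialIntegrand_eq]
    gcongr
    calc y ^ (n - 1) * exp (-(2 * y ^ 2 / c))
        ≤ (√n * radialProfile c (y / √n)) ^ (n - 1) :=
          pow_mul_exp_le_radialProfile hc hn hy0.le
      _ ≤ _ := by
          have := radialProfile_pos (c := c) (div_pos hy0 hsqrt)
          gcongr
          exact radialProfile_le_min hc (by positivity) hσR
  calc radialIntegral M c R n
      ≤ ∫ _ in Set.Ioc 0 (√n * R),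
          (1 + n * R ^ 2 / c) ^ (2 * M) * (√n * radialProfile c (min R (√c / 2))) ^ (n - 1) :=
        setIntegral_mono_on (integrableOn_radialIntegrand M n _ _)
          (integrableOn_const measure_Ioc_lt_top.ne) measurableSet_Ioc hbound
    _ = _ := by
        rw [setIntegral_const, volume_real_Ioc_of_le (by positivity), sub_zero, smul_eq_mul]

lemma exists_const_mul_pow_le_radialIntegral {σ₁ σ₂ : ℝ} (hσ₁ : 0 < σ₁) (hσ₁₂ : σ₁ < σ₂)
    (hσ₂R : σ₂ ≤ R) (hσ₂c : 2 * σ₂ ^ 2 < c) :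
    ∃ C > 0, ∀ᶠ n : ℕ in atTop,
      C * (√n * (σ₁ * exp (-(2 * σ₂ ^ 2 / c)))) ^ n ≤ radialIntegral M c R n := by
  have hc : 0 < c := by nlinarith
  obtain ⟨δ, hδ, hδF⟩ := exists_forall_le_normalizedLaguerre M
    (v := 2 * σ₂ ^ 2 / c) ((div_lt_one hc).mpr hσ₂c)
  refine ⟨δ ^ 2 * (σ₂ - σ₁) / σ₁, by have := sub_pos.mpr hσ₁₂; positivity, ?_⟩
  filter_upwards [(tendsto_natCast_atTop_atTop.atTop_div_const two_pos).eventually hδF,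
    eventually_ne_atTop 0] with n hF hn
  have hsqrt : 0 < √(n : ℝ) := sqrt_pos.mpr (by positivity)
  have hbound : ∀ y ∈ Set.Ioc (√n * σ₁) (√n * σ₂),
      δ ^ 2 * ((√n * σ₁) ^ (n - 1) * exp (-(2 * σ₂ ^ 2 / c)) ^ n) ≤
        radialIntegrand M c n y := by
    rintro y ⟨hy₁, hy₂⟩
    have hy0 : 0 < y := lt_of_le_of_lt (by positivity) hy₁
    have hy_sq := sq_le_mul_sq_of_le_sqrt_mul n.cast_nonneg hy0.le hy₂
    have hFy := hF (y ^ 2 / c) (by positivity)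
      (by rw [div_le_iff₀ hc]; field_simp; linarith)
    rw [radialIntegrand_eq]
    gcongr
    rw [← exp_nat_mul, exp_le_exp, mul_neg, neg_le_neg_iff, mul_div_assoc', ← mul_assoc,
      mul_comm (n : ℝ) 2, mul_assoc]
    gcongr
  have hsub : Set.Ioc (√n * σ₁) (√n * σ₂) ⊆ Set.Ioc 0 (√n * R) := fun y hy =>
    ⟨lt_of_le_of_lt (by positivity) hy.1, hy.2.trans (by gcongr)⟩
  calc δ ^ 2 * (σ₂ - σ₁) / σ₁ * (√n * (σ₁ * exp (-(2 * σ₂ ^ 2 / c)))) ^ n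
      = volume.real (Set.Ioc (√n * σ₁) (√n * σ₂)) •
          (δ ^ 2 * ((√n * σ₁) ^ (n - 1) * exp (-(2 * σ₂ ^ 2 / c)) ^ n)) := by
        rw [volume_real_Ioc_of_le (by gcongr), smul_eq_mul, ← mul_assoc, mul_pow,
          ← pow_sub_one_mul hn]
        field_simp
    _ ≤ ∫ y in Set.Ioc (√n * σ₁) (√n * σ₂), radialIntegrand M c n y :=
        setIntegral_ge_of_const_le measurableSet_Ioc measure_Ioc_lt_top.ne hbound
          (integrableOn_radialIntegrand M n _ _)
    _ ≤ radialIntegral M c R n :=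
        setIntegral_mono_set (integrableOn_radialIntegrand M n _ _)
          ((ae_restrict_iff' measurableSet_Ioc).mpr (Eventually.of_forall fun y hy =>
            mul_nonneg (pow_nonneg hy.1.le _) (sq_nonneg _)))
          hsub.eventuallyLE

lemma eventually_radialIntegral_pos (hc : 0 < c) (hR : 0 < R) :
    ∀ᶠ n : ℕ in atTop, 0 < radialIntegral M c R n := by
  have hρ₀ : 0 < min R (√c / 2) := lt_min hR (by positivity)
  obtain ⟨C, hC, hCJ⟩ := exists_const_mul_pow_le_radialIntegral M (half_pos hρ₀)
    (half_lt_self hρ₀) (min_le_left _ _) (two_mul_sq_min_lt hc hR)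
  filter_upwards [hCJ, eventually_ne_atTop 0] with n hCJn hn
  have hsqrt : 0 < √(n : ℝ) := sqrt_pos.mpr (by positivity)
  exact lt_of_lt_of_le (by positivity) hCJn

theorem tendsto_log_radialIntegral_div (hc : 0 < c) (hR : 0 < R) :
    Tendsto (fun n : ℕ => log (radialIntegral M c R n / √n ^ n) / n) atTop
      (𝓝 (log (radialProfile c (min R (√c / 2))))) := by
  set ρ₀ := min R (√c / 2)
  have hρ₀ : 0 < ρ₀ := lt_min hR (by positivity)
  have hH := radialProfile_pos (c := c) hρ₀
  refine tendsto_log_div_of_bounds (K := (1 + R ^ 2 / c) ^ (2 * M) * (R / radialProfile c ρ₀))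
    (p := 2 * M) hH ?_ fun B hB hBH => ?_
  · filter_upwards [eventually_ne_atTop 0] with n hn
    have hn1 : (1 : ℝ) ≤ n := Nat.one_le_cast.mpr (Nat.one_le_iff_ne_zero.mpr hn)
    have hsqrt : 0 < √(n : ℝ) := sqrt_pos.mpr (by positivity)
    rw [div_le_iff₀ (by positivity)]
    calc radialIntegral M c R n
        ≤ √n * R * ((1 + n * R ^ 2 / c) ^ (2 * M) * (√n * radialProfile c ρ₀) ^ (n - 1)) :=
          radialIntegral_le M hc hR hn
      _ ≤ √n * R * (((1 + R ^ 2 / c) * n) ^ (2 * M) * (√n * radialProfile c ρ₀) ^ (n - 1)) := by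
          gcongr
          have : 0 ≤ R ^ 2 / c := by positivity
          rw [mul_div_assoc]
          nlinarith
      _ = _ := by
          rw [← pow_sub_one_mul hn (radialProfile c ρ₀), ← pow_sub_one_mul hn √(n : ℝ), mul_pow,
            mul_pow]
          field_simp
  · set σ₁ := B * exp (2 * ρ₀ ^ 2 / c)
    have hσ₁B : σ₁ * exp (-(2 * ρ₀ ^ 2 / c)) = B := by
      rw [mul_assoc, ← exp_add, add_neg_cancel, exp_zero, mul_one]
    have hσ₁ρ₀ : σ₁ < ρ₀ := by
      have := mul_lt_mul_of_pos_right hBH (exp_pos (2 * ρ₀ ^ 2 / c))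
      rwa [radialProfile, mul_assoc, ← exp_add, neg_add_cancel, exp_zero, mul_one] at this
    obtain ⟨C, hC, hCJ⟩ := exists_const_mul_pow_le_radialIntegral M (by positivity) hσ₁ρ₀
      (min_le_left _ _) (two_mul_sq_min_lt hc hR)
    refine ⟨C, hC, ?_⟩
    filter_upwards [hCJ, eventually_ne_atTop 0] with n hCJn hn
    have hsqrt : 0 < √(n : ℝ) := sqrt_pos.mpr (by positivity)
    rwa [le_div_iff₀ (by positivity), mul_assoc, ← mul_pow, mul_comm B, ← hσ₁B]

end RadialIntegral

lemma lagGaussKernel_eq (M : ℕ) (α ρ : ℝ) (n : ℕ) (x : EuclideanSpace ℝ (Fin n)) :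
    lagGaussKernel (M + 1) α ρ n x = exp (n * ρ) *
      (normalizedLaguerre M (n / 2) (‖x‖ ^ 2 / (α ^ 2 * (M + 1 : ℕ))) *
        exp (-(‖x‖ ^ 2 / (α ^ 2 * (M + 1 : ℕ))))) := by
  rw [lagGaussKernel, Nat.add_sub_cancel,
    laguerreL_eq_mul_normalizedLaguerre M (by linarith [(by positivity : (0 : ℝ) ≤ n / 2)]),
    show ((M + 1 : ℕ) : ℝ) + n / 2 = M + n / 2 + 1 by push_cast; ring]
  have := (Gamma_pos_of_pos (by positivity : (0 : ℝ) < M + n / 2 + 1)).ne'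
  have := (Gamma_pos_of_pos (by positivity : (0 : ℝ) < n / 2 + 1)).ne'
  field_simp

lemma integral_closedBall_sq_lagGaussKernel (M : ℕ) (α ρ R : ℝ) {n : ℕ} (hn : n ≠ 0) :
    ∫ x in Metric.closedBall (0 : EuclideanSpace ℝ (Fin n)) (√n * R),
        (lagGaussKernel (M + 1) α ρ n x) ^ 2 =
      exp (n * ρ) ^ 2 * (n * (√π ^ n / Gamma (n / 2 + 1)) *
        radialIntegral M (α ^ 2 * (M + 1 : ℕ)) R n) := by
  have : Nonempty (Fin n) := ⟨⟨0, Nat.pos_of_ne_zero hn⟩⟩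
  simp_rw [lagGaussKernel_eq, mul_pow (exp _)]
  rw [integral_const_mul, integral_closedBall_fun_norm volume (f := fun y =>
      (normalizedLaguerre M (n / 2) (y ^ 2 / (α ^ 2 * (M + 1 : ℕ))) *
        exp (-(y ^ 2 / (α ^ 2 * (M + 1 : ℕ))))) ^ 2),
    finrank_euclideanSpace_fin, measureReal_def, EuclideanSpace.volume_ball, Fintype.card_fin,
    ENNReal.ofReal_one, one_pow, one_mul, ENNReal.toReal_ofReal (by positivity)]
  rfl

theorem tendsto_neg_log_integral_closedBall_sq_lagGaussKernel {m : ℕ} (hm : m ≠ 0) (ρ : ℝ)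
    {α R : ℝ} (hα : 0 < α) (hR : 0 < R) :
    Tendsto (fun n : ℕ => -(1 / (n : ℝ)) * log (exp (-(n * ρ)) *
        ∫ x in Metric.closedBall (0 : EuclideanSpace ℝ (Fin n)) (√n * R),
          (lagGaussKernel m α ρ n x) ^ 2)) atTop
      (𝓝 (-ρ - log π / 2 - (1 + log 2) / 2 -
        log (radialProfile (α ^ 2 * m) (min R (√(α ^ 2 * m) / 2))))) := by
  obtain ⟨M, rfl⟩ := Nat.exists_eq_add_one_of_ne_zero hm
  set c : ℝ := α ^ 2 * (M + 1 : ℕ)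
  have hc : 0 < c := by positivity
  have hlim := ((tendsto_log_Gamma_half_add_one_div.const_add (-ρ - log π / 2)).sub
    (tendsto_log_radialIntegral_div M hc hR)).sub (tendsto_add_mul_log_div 0 1)
  rw [show -ρ - log π / 2 - (1 + log 2) / 2 - log (radialProfile c (min R (√c / 2))) =
    -ρ - log π / 2 + -(1 + log 2) / 2 - log (radialProfile c (min R (√c / 2))) - 0 by ring]
  refine hlim.congr' ?_
  filter_upwards [eventually_radialIntegral_pos M hc hR, eventually_ne_atTop 0] with n hJ hn
  have hn' : (0 : ℝ) < n := by positivity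
  have hsqrt : 0 < √(n : ℝ) := sqrt_pos.mpr hn'
  have hΓ := Gamma_pos_of_pos (by positivity : (0 : ℝ) < n / 2 + 1)
  -- `log (e^{-nρ} ∫ K²) = nρ + log n + (n/2) log π - log Γ(n/2 + 1) + (n/2) log n + log (J / √n^n)`
  rw [integral_closedBall_sq_lagGaussKernel M α ρ R hn, log_div hJ.ne' (by positivity),
    log_mul (by positivity) (by positivity), log_mul (by positivity) (by positivity),
    log_mul (by positivity) hJ.ne', log_mul (by positivity) (by positivity),
    log_div (by positivity) hΓ.ne', log_pow, log_pow, log_pow, log_exp, log_exp,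
    log_sqrt n.cast_nonneg, log_sqrt pi_pos.le]
  field_simp
  ring

theorem laguerre_gaussian_rate (m : ℕ) (hm : 1 ≤ m) (ρ α : ℝ)
    (hα_pos : 0 < α)
    (Rstar : ℝ) (hRstar : Rstar = Real.sqrt m * α / 2) :
    (∀ R : ℝ, 0 < R → R < Rstar →
      Tendsto (fun n : ℕ => -(1 / (n : ℝ)) *
          Real.log (Real.exp (-(n * ρ)) *
            ∫ x in Metric.closedBall (0 : EuclideanSpace ℝ (Fin n)) (Real.sqrt n * R),
              (lagGaussKernel m α ρ n x) ^ 2))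
        atTop
        (nhds (-ρ - (1 / 2) * Real.log (2 * π * Real.exp 1) +
          2 * R ^ 2 / (α ^ 2 * m) - Real.log R))) ∧
    (∀ R : ℝ, Rstar < R →
      Tendsto (fun n : ℕ => -(1 / (n : ℝ)) *
          Real.log (Real.exp (-(n * ρ)) *
            ∫ x in Metric.closedBall (0 : EuclideanSpace ℝ (Fin n)) (Real.sqrt n * R),
              (lagGaussKernel m α ρ n x) ^ 2))
        atTop
        (nhds (-ρ - Real.log α - (1 / 2) * Real.log ((m : ℝ) * π / 2)))) := by
  have hm₀ : (0 : ℝ) < m := by exact_mod_cast hm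
  have hc : 0 < α ^ 2 * m := by positivity
  have hRstar_eq : Rstar = √(α ^ 2 * m) / 2 := by
    rw [hRstar, sqrt_mul (sq_nonneg α), sqrt_sq hα_pos.le, mul_comm α]
  have hlim := fun {R : ℝ} (hR : 0 < R) =>
    tendsto_neg_log_integral_closedBall_sq_lagGaussKernel (by omega : m ≠ 0) ρ hα_pos hR
  refine ⟨fun R hR hRlt => ?_, fun R hRgt => ?_⟩
  · convert hlim hR using 2
    rw [← hRstar_eq, min_eq_left hRlt.le, log_radialProfile hR,
      log_mul (by positivity) (exp_pos 1).ne', log_mul two_ne_zero pi_ne_zero, log_exp]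
    ring
  · have hR : 0 < R := lt_of_le_of_lt (by rw [hRstar_eq]; positivity) hRgt
    convert hlim hR using 2
    rw [← hRstar_eq, min_eq_right hRgt.le, hRstar_eq, log_radialProfile (by positivity), div_pow,
      sq_sqrt hc.le, log_div (x := √(α ^ 2 * m)) (by positivity) two_ne_zero, log_sqrt hc.le,
      log_mul (by positivity) hm₀.ne', log_pow, log_div (by positivity) two_ne_zero,
      log_mul hm₀.ne' pi_ne_zero]
    field_simp
    ring
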